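/- arXiv:2305.00343 — 2 statements merged into one kernel-verified Lean document; each statement's English description precedes it below -/
import Mathlib

section
/- Consider the 1-dimensional physical Brownian momentum P solving dP_t = −(M/m)P_t dt + dW_t with P₀ = p, where M > 0 and m > 0. Then for every p ∈ ℝ, t > 0, and every level n ≥ 0, the n-th level expected signature Φₙ^{(m)}(t,p) converges as m → 0⁺ to (−p)ⁿ/n!. -/
/-!
`Phi1D M m t p n` is a fixed polynomial in `x = 1 - e^{-(M/m)t}`, `y = m/(2M)` and
`z = 1 - e^{-2(M/m)t}`. As `m → 0⁺` these tend to `1`, `0` and `1`, and at `(1, 0, 1)` every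
summand except `i = 0` carries the factor `0 ^ i`, leaving `(-p)ⁿ / n!`.
-/

open MeasureTheory Filter

/-- The explicit formula for the level-`n` expected signature of the 1-D physical
Brownian momentum `dP = −(M/m) P dt + dW`, `P₀ = p` (covering both the odd and the even
level formulas of Lemma 3.1 with `θ = M/m`, `σ = 1`). -/
noncomputable def Phi1D (M m t p : ℝ) (n : ℕ) : ℝ :=
  (1 / (n.factorial : ℝ)) *
    ∑ i ∈ Finset.range (n / 2 + 1),
      (n.choose (2 * i) : ℝ) * (-p) ^ (n - 2 * i) *
        (1 - Real.exp (-(M / m) * t)) ^ (n - 2 * i) *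
        (m / (2 * M)) ^ i * (1 - Real.exp (-2 * (M / m) * t)) ^ i *
        (Nat.doubleFactorial (2 * i - 1) : ℝ)

open Topology

noncomputable def Phi1DPoly (p : ℝ) (n : ℕ) (x y z : ℝ) : ℝ :=
  (1 / (n.factorial : ℝ)) *
    ∑ i ∈ Finset.range (n / 2 + 1),
      (n.choose (2 * i) : ℝ) * (-p) ^ (n - 2 * i) * x ^ (n - 2 * i) * y ^ i * z ^ i *
        (Nat.doubleFactorial (2 * i - 1) : ℝ)

lemma Phi1D_eq_Phi1DPoly (M m t p : ℝ) (n : ℕ) :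
    Phi1D M m t p n = Phi1DPoly p n (1 - Real.exp (-(M / m) * t)) (m / (2 * M))
      (1 - Real.exp (-2 * (M / m) * t)) :=
  rfl

lemma continuous_Phi1DPoly (p : ℝ) (n : ℕ) :
    Continuous fun q : ℝ × ℝ × ℝ => Phi1DPoly p n q.1 q.2.1 q.2.2 := by
  unfold Phi1DPoly
  fun_prop

lemma tendsto_Phi1DPoly {α : Type*} {l : Filter α} {f g h : α → ℝ} {x y z : ℝ} (p : ℝ)
    (n : ℕ) (hf : Tendsto f l (𝓝 x)) (hg : Tendsto g l (𝓝 y)) (hh : Tendsto h l (𝓝 z)) :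
    Tendsto (fun a => Phi1DPoly p n (f a) (g a) (h a)) l (𝓝 (Phi1DPoly p n x y z)) := by
  have hcomp :=
    ((continuous_Phi1DPoly p n).tendsto (x, y, z)).comp (hf.prodMk_nhds (hg.prodMk_nhds hh))
  exact hcomp

lemma Phi1DPoly_one_zero_one (p : ℝ) (n : ℕ) :
    Phi1DPoly p n 1 0 1 = (-p) ^ n / (n.factorial : ℝ) := by
  simp [Phi1DPoly, Finset.sum_range_succ', div_eq_inv_mul]

lemma tendsto_one_sub_exp_neg_div_mul {c t : ℝ} (hc : 0 < c) (ht : 0 < t) :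
    Tendsto (fun m : ℝ => 1 - Real.exp (-(c / m) * t)) (𝓝[>] 0) (𝓝 1) := by
  have hdiv : Tendsto (fun m : ℝ => c / m * t) (𝓝[>] 0) atTop := by
    simpa only [div_eq_mul_inv] using
      (tendsto_inv_nhdsGT_zero.const_mul_atTop hc).atTop_mul_const ht
  have hexp : Tendsto (fun m : ℝ => Real.exp (-(c / m) * t)) (𝓝[>] 0) (𝓝 0) := by
    simpa only [neg_mul, Function.comp_def] using Real.tendsto_exp_neg_atTop_nhds_zero.comp hdiv
  simpa using hexp.const_sub 1

/-- in the small mass limit `m → 0⁺`, each level `n` of the expected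
signature of the 1-D physical Brownian momentum converges to `(−p)ⁿ / n!`. -/
theorem one_dim_small_mass_limit
    (M : ℝ) (hM : 0 < M) (t : ℝ) (ht : 0 < t) (p : ℝ) (n : ℕ) :
    Tendsto (fun m : ℝ => Phi1D M m t p n) (nhdsWithin 0 (Set.Ioi 0))
      (nhds ((-p) ^ n / (n.factorial : ℝ))) := by
  have hx := tendsto_one_sub_exp_neg_div_mul hM ht
  have hy : Tendsto (fun m : ℝ => m / (2 * M)) (𝓝[>] 0) (𝓝 0) := by
    exact ((continuous_id.div_const _).tendsto' 0 0 (zero_div _)).mono_left nhdsWithin_le_nhds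
  have hz : Tendsto (fun m : ℝ => 1 - Real.exp (-2 * (M / m) * t)) (𝓝[>] 0) (𝓝 1) := by
    simpa only [mul_div_assoc, neg_mul] using
      tendsto_one_sub_exp_neg_div_mul (mul_pos two_pos hM) ht
  simp only [Phi1D_eq_Phi1DPoly, ← Phi1DPoly_one_zero_one]
  exact tendsto_Phi1DPoly p n hx hy hz
end

section
/- Let D = Diag(λ₁,…,λ_d) be a diagonal complex d×d matrix with Re(λᵢ) > 0 for all i, and p ∈ ℂᵈ. Define the order-n tensor 𝔄ₙ(p) as the iterated integral over {0 ≤ t₁ < ⋯ < tₙ < ∞} of (−D e^{−Dt₁} p) ⊗ ⋯ ⊗ (−D e^{−Dtₙ} p). Then for every multi-index I = (i₁,…,iₙ) ∈ {1,…,d}ⁿ, the I-th component of 𝔄ₙ(p) equals ∏_{j=1}^{n} (−λ_{i_j} p^{i_j})/(λ_{i_j} + λ_{i_{j+1}} + ⋯ + λ_{i_n}). -/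
/-!
Writing the ordered times as partial sums `tⱼ = s₁ + ⋯ + sⱼ` of their gaps is a unimodular
linear change of variables that maps the positive orthant onto the ordered simplex up to a null
set, and turns `∑ⱼ cⱼ tⱼ` into `∑ⱼ (cⱼ + ⋯ + cₙ) sⱼ`. The integral of `∏ⱼ e^{-cⱼ tⱼ}` over the
simplex therefore factorizes into one-dimensional Laplace integrals
`∫₀^∞ e^{-(cⱼ + ⋯ + cₙ) s} ds = (cⱼ + ⋯ + cₙ)⁻¹`.
-/

open MeasureTheory Finset

theorem integral_Ioi_cexp_neg_mul {C : ℂ} (hC : 0 < C.re) :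
    ∫ x : ℝ in Set.Ioi (0 : ℝ), Complex.exp (-C * x) = C⁻¹ := by
  rw [integral_exp_mul_complex_Ioi (by simpa using hC)]
  simp

theorem sum_mul_sum_Iic {ι R : Type*} [Fintype ι] [Preorder ι] [LocallyFiniteOrderBot ι]
    [LocallyFiniteOrderTop ι] [CommSemiring R] (c s : ι → R) :
    ∑ j, c j * ∑ l ∈ Iic j, s l = ∑ l, (∑ j ∈ Ici l, c j) * s l := by
  simp_rw [Finset.mul_sum, Finset.sum_mul]
  exact Finset.sum_comm' (by simp)

def partialSumMatrix (n : ℕ) : Matrix (Fin n) (Fin n) ℝ :=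
  Matrix.of fun i j => if j ≤ i then 1 else 0

def partialSums (n : ℕ) : (Fin n → ℝ) →ₗ[ℝ] Fin n → ℝ :=
  Matrix.toLin' (partialSumMatrix n)

theorem partialSums_apply {n : ℕ} (s : Fin n → ℝ) (i : Fin n) :
    partialSums n s i = ∑ l ∈ Iic i, s l := by
  simp [partialSums, partialSumMatrix, Matrix.mulVec, dotProduct, sum_ite, filter_ge_eq_Iic]

theorem det_partialSumMatrix (n : ℕ) : (partialSumMatrix n).det = 1 := by
  rw [Matrix.det_of_isLowerTriangular (partialSumMatrix n) fun i j hij => if_neg hij.not_ge]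
  simp [partialSumMatrix]

theorem measurePreserving_partialSums (n : ℕ) :
    MeasurePreserving (partialSums n) volume volume := by
  refine ⟨(partialSums n).continuous_of_finiteDimensional.measurable, ?_⟩
  rw [partialSums, Real.map_matrix_volume_pi_eq_smul_volume_pi (by simp [det_partialSumMatrix]),
    det_partialSumMatrix]
  simp

theorem measurableEmbedding_partialSums (n : ℕ) : MeasurableEmbedding (partialSums n) := by
  refine (LinearMap.isClosedEmbedding_of_injective
    (LinearMap.ker_eq_bot.mpr ?_)).measurableEmbedding
  rw [partialSums, Matrix.toLin'_apply']
  exact Matrix.mulVec_injective_iff_isUnit.mpr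
    ((Matrix.isUnit_iff_isUnit_det _).mpr (by simp [det_partialSumMatrix]))

def orderedSimplex (n : ℕ) : Set (Fin n → ℝ) :=
  {t | (∀ i, 0 ≤ t i) ∧ StrictMono t}

theorem partialSums_mem_orderedSimplex {n : ℕ} {s : Fin n → ℝ} (hs : ∀ i, 0 < s i) :
    partialSums n s ∈ orderedSimplex n := by
  refine ⟨fun i => ?_, fun i j hij => ?_⟩
  · rw [partialSums_apply]
    exact sum_nonneg fun l _ => (hs l).le
  · simp only [partialSums_apply]
    exact sum_lt_sum_of_subset (Iic_subset_Iic.mpr hij.le) (mem_Iic.mpr le_rfl)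
      (by simpa using hij) (hs j) fun l _ _ => (hs l).le

theorem nonneg_of_partialSums_mem_orderedSimplex {n : ℕ} {s : Fin n → ℝ}
    (hs : partialSums n s ∈ orderedSimplex n) (i : Fin n) : 0 ≤ s i := by
  have h : partialSums n s i = s i + ∑ l ∈ Iio i, s l := by
    rw [partialSums_apply, Iic_eq_cons_Iio, sum_cons]
  by_cases hi : IsMin i
  · rw [Iio_eq_empty.mpr hi, sum_empty, add_zero] at h
    exact h ▸ hs.1 i
  · rw [← Iic_pred_eq_Iio_of_not_isMin hi, ← partialSums_apply] at h
    have := hs.2 (Order.pred_lt_of_not_isMin hi)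
    linarith

theorem partialSums_preimage_orderedSimplex_ae_eq (n : ℕ) :
    partialSums n ⁻¹' orderedSimplex n =ᵐ[volume] Set.univ.pi fun _ => Set.Ioi (0 : ℝ) := by
  have hsub : Set.univ.pi (fun _ => Set.Ioi (0 : ℝ)) ⊆ partialSums n ⁻¹' orderedSimplex n :=
    fun s hs => partialSums_mem_orderedSimplex fun i => hs i (Set.mem_univ i)
  have hsup : partialSums n ⁻¹' orderedSimplex n ⊆ Set.Ici 0 :=
    fun s hs i => nonneg_of_partialSums_mem_orderedSimplex hs i
  have hnull : volume (Set.Ici (0 : Fin n → ℝ) \ Set.univ.pi fun _ => Set.Ioi (0 : ℝ)) = 0 := by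
    rw [volume_pi]
    exact (ae_eq_set.mp Measure.univ_pi_Ioi_ae_eq_Ici).2
  refine ae_eq_set.mpr ⟨measure_mono_null (Set.sdiff_subset_sdiff_left hsup) hnull, ?_⟩
  rw [Set.sdiff_eq_empty.mpr hsub, measure_empty]

theorem setIntegral_orderedSimplex_prod_cexp {n : ℕ} (c : Fin n → ℂ) (hc : ∀ j, 0 < (c j).re) :
    ∫ t in orderedSimplex n, ∏ j, Complex.exp (-c j * t j)
      = ∏ j, (∑ l ∈ Ici j, c l)⁻¹ := by
  have hexp (s : Fin n → ℝ) : ∏ j, Complex.exp (-c j * partialSums n s j)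
      = ∏ l, Complex.exp (-(∑ j ∈ Ici l, c j) * s l) := by
    simp_rw [← Complex.exp_sum, neg_mul, sum_neg_distrib, partialSums_apply, Complex.ofReal_sum,
      sum_mul_sum_Iic]
  calc ∫ t in orderedSimplex n, ∏ j, Complex.exp (-c j * t j)
      = ∫ s in partialSums n ⁻¹' orderedSimplex n, ∏ j, Complex.exp (-c j * partialSums n s j) :=
        ((measurePreserving_partialSums n).setIntegral_preimage_emb
          (measurableEmbedding_partialSums n) _ _).symm
    _ = ∫ s in Set.univ.pi fun _ => Set.Ioi (0 : ℝ),
          ∏ l, Complex.exp (-(∑ j ∈ Ici l, c j) * s l) := by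
        rw [setIntegral_congr_set (partialSums_preimage_orderedSimplex_ae_eq n)]
        simp_rw [hexp]
    _ = ∏ l, ∫ x in Set.Ioi (0 : ℝ), Complex.exp (-(∑ j ∈ Ici l, c j) * x) := by
        rw [volume_pi, Measure.restrict_pi_pi]
        exact integral_fintype_prod_eq_prod
          fun l (x : ℝ) => Complex.exp (-(∑ j ∈ Ici l, c j) * x)
    _ = ∏ j, (∑ l ∈ Ici j, c l)⁻¹ := by
        refine prod_congr rfl fun j _ => integral_Ioi_cexp_neg_mul ?_
        rw [Complex.re_sum]
        exact sum_pos (fun l _ => hc l) ⟨j, mem_Ici.mpr le_rfl⟩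

/-- for `D = Diag(λ₁,…,λ_d)` with `Re λᵢ > 0` and `p ∈ ℂᵈ`, each component
`I = (i₁,…,iₙ)` of the tensor
`𝔄ₙ(p) = ∫_{0 ≤ t₁ < ⋯ < tₙ < ∞} (−D e^{−Dt₁} p) ⊗ ⋯ ⊗ (−D e^{−Dtₙ} p)` equals
`∏ⱼ (−λ_{i_j} p^{i_j}) / (λ_{i_j} + ⋯ + λ_{i_n})`. For diagonal `D`, the `i`-th
coordinate of `−D e^{−Dt} p` is `−λᵢ e^{−λᵢ t} pⁱ`, and the `I`-component of a pure
tensor is the product of the corresponding coordinates. -/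
theorem diagonal_limit_tensor_component
    {d n : ℕ} (lam : Fin d → ℂ) (hlam : ∀ i, 0 < (lam i).re)
    (p : Fin d → ℂ) (I : Fin n → Fin d) :
    ∫ t in {t : Fin n → ℝ | (∀ i, 0 ≤ t i) ∧ StrictMono t},
        ∏ j, (-(lam (I j)) * Complex.exp (-(lam (I j)) * (t j)) * p (I j))
      = ∏ j, (-(lam (I j)) * p (I j)) / ∑ l ∈ Finset.Ici j, lam (I l) := by
  have hfactor (t : Fin n → ℝ) :
      ∏ j, (-(lam (I j)) * Complex.exp (-(lam (I j)) * (t j)) * p (I j))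
        = (∏ j, (-(lam (I j)) * p (I j))) * ∏ j, Complex.exp (-(lam (I j)) * (t j)) := by
    rw [← prod_mul_distrib]
    exact prod_congr rfl fun j _ => by ring
  have hsimplex := setIntegral_orderedSimplex_prod_cexp (fun j => lam (I j)) fun j => hlam (I j)
  rw [orderedSimplex] at hsimplex
  simp_rw [hfactor, integral_const_mul, hsimplex, ← prod_mul_distrib, div_eq_mul_inv]
end
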